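/- arXiv:2403.12159 — 12 statements merged into one kernel-verified Lean document; each statement's English description precedes it below -/
import Mathlib

section
/- For all integers n ≥ 2, the sequence v satisfies n·v_n = (n+1)·v_{n-1} + (n+2)·v_{n-2}. -/
/-- The tiling-walking sequence of the (1×n)-board:
`v n = ∑_{k=0}^{⌊n/2⌋} C(n-k, k) * (n-k+1)`. -/
def v (n : ℕ) : ℕ := ∑ k ∈ Finset.range (n / 2 + 1), (n - k).choose k * (n - k + 1)

/-- The same sum extended to the full range. -/
def V (n : ℕ) : ℕ := ∑ k ∈ Finset.range (n + 1), (n - k).choose k * (n - k + 1)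

/-- Fibonacci-like diagonal sum. -/
def U (n : ℕ) : ℕ := ∑ k ∈ Finset.range (n + 1), (n - k).choose k

lemma v_eq_V (n : ℕ) : v n = V n := by
  unfold v V
  apply Finset.sum_subset
  · intro x hx
    simp only [Finset.mem_range] at *
    omega
  · intro k hk hk2
    simp only [Finset.mem_range] at hk hk2
    have h : n - k < k := by omega
    simp [Nat.choose_eq_zero_of_lt h]

lemma U_rec (n : ℕ) : U (n + 2) = U (n + 1) + U n := by
  have h1 : U (n + 2) = (∑ i ∈ Finset.range (n + 2), (n + 1 - i).choose (i + 1)) + 1 := by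
    unfold U
    rw [Finset.sum_range_succ']
    congr 1
    apply Finset.sum_congr rfl
    intro i _
    have : n + 2 - (i + 1) = n + 1 - i := by omega
    rw [this]
  have h2 : ∀ i ∈ Finset.range (n + 2),
      (n + 1 - i).choose (i + 1) = (n - i).choose i + (n - i).choose (i + 1) := by
    intro i hi
    simp only [Finset.mem_range] at hi
    rcases le_or_gt i n with h | h
    · have : n + 1 - i = (n - i) + 1 := by omega
      rw [this, Nat.choose_succ_succ]
    · have hi' : i = n + 1 := by omega
      subst hi'
      have e0 : n - (n + 1) = 0 := by omega
      have e1 : n + 1 - (n + 1) = 0 := by omega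
      simp [e0, e1, Nat.choose_eq_zero_iff]
  rw [Finset.sum_congr rfl h2, Finset.sum_add_distrib] at h1
  have h3 : (∑ i ∈ Finset.range (n + 2), (n - i).choose i) = U n := by
    unfold U
    rw [Finset.sum_range_succ]
    have e0 : n - (n + 1) = 0 := by omega
    simp [e0, Nat.choose_eq_zero_iff]
  have h4 : U (n + 1) = (∑ i ∈ Finset.range (n + 1), (n - i).choose (i + 1)) + 1 := by
    unfold U
    rw [Finset.sum_range_succ']
    congr 1
    apply Finset.sum_congr rfl
    intro i _
    have : n + 1 - (i + 1) = n - i := by omega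
    rw [this]
  have h5 : (∑ i ∈ Finset.range (n + 2), (n - i).choose (i + 1))
      = ∑ i ∈ Finset.range (n + 1), (n - i).choose (i + 1) := by
    rw [Finset.sum_range_succ]
    have e0 : n - (n + 1) = 0 := by omega
    simp [e0, Nat.choose_eq_zero_iff]
  omega

lemma V_rec (n : ℕ) : V (n + 2) + V n = (n + 3) * U (n + 2) := by
  have hT : (∑ k ∈ Finset.range (n + 3), k * (n + 2 - k).choose k) = V n := by
    rw [show n + 3 = (n + 2) + 1 from rfl, Finset.sum_range_succ']
    simp only [Nat.zero_mul, Nat.add_zero]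
    have h2 : ∀ j ∈ Finset.range (n + 2),
        (j + 1) * (n + 2 - (j + 1)).choose (j + 1) = (n - j).choose j * (n - j + 1) := by
      intro j hj
      simp only [Finset.mem_range] at hj
      rcases le_or_gt j n with h | h
      · have e : n + 2 - (j + 1) = (n - j) + 1 := by omega
        rw [e]
        have hs := Nat.add_one_mul_choose_eq (n - j) j
        calc (j + 1) * ((n - j) + 1).choose (j + 1)
            = ((n - j) + 1).choose (j + 1) * (j + 1) := by ring
          _ = (n - j + 1) * (n - j).choose j := hs.symm
          _ = (n - j).choose j * (n - j + 1) := by ring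
      · have hj' : j = n + 1 := by omega
        subst hj'
        have e0 : n - (n + 1) = 0 := by omega
        have e1 : n + 2 - (n + 1 + 1) = 0 := by omega
        simp [e0, e1, Nat.choose_eq_zero_iff]
    rw [Finset.sum_congr rfl h2]
    unfold V
    rw [Finset.sum_range_succ]
    have e0 : n - (n + 1) = 0 := by omega
    simp [e0, Nat.choose_eq_zero_iff]
  have hsum : V (n + 2) + (∑ k ∈ Finset.range (n + 3), k * (n + 2 - k).choose k)
      = (n + 3) * U (n + 2) := by
    unfold V U
    rw [← Finset.sum_add_distrib, Finset.mul_sum]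
    apply Finset.sum_congr rfl
    intro k hk
    simp only [Finset.mem_range] at hk
    have h1 : n + 2 - k + 1 = n + 3 - k := by omega
    have h2 : (n + 3 - k) + k = n + 3 := by omega
    calc (n + 2 - k).choose k * (n + 2 - k + 1) + k * (n + 2 - k).choose k
        = (n + 2 - k).choose k * ((n + 3 - k) + k) := by rw [h1]; ring
      _ = (n + 3) * (n + 2 - k).choose k := by rw [h2]; ring
  rw [hT] at hsum
  exact hsum

lemma V_closed : ∀ n : ℕ, 5 * V (n + 1) = (3 * n + 8) * U (n + 1) + (n + 2) * U n := by
  intro n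
  induction n using Nat.twoStepInduction with
  | zero => decide
  | one => decide
  | more n ih _ =>
    have h : V (n + 3) + V (n + 1) = (n + 4) * U (n + 3) := V_rec (n + 1)
    have r3 : U (n + 3) = U (n + 2) + U (n + 1) := U_rec (n + 1)
    have r2 : U (n + 2) = U (n + 1) + U n := U_rec n
    have goal : 5 * V (n + 3) = (3 * (n + 2) + 8) * U (n + 3) + (n + 2 + 2) * U (n + 2) := by
      rw [r3, r2]
      rw [r3, r2] at h
      zify at h ih ⊢
      linear_combination 5 * h - ih
    exact goal

theorem stmt_0 : ∀ n : ℕ, 2 ≤ n → n * v n = (n + 1) * v (n - 1) + (n + 2) * v (n - 2) := by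
  intro n hn
  obtain ⟨m, rfl⟩ : ∃ m, n = m + 2 := ⟨n - 2, by omega⟩
  simp only [Nat.add_sub_cancel, show m + 2 - 1 = m + 1 from rfl]
  simp only [v_eq_V]
  apply Nat.eq_of_mul_eq_mul_left (show 0 < 5 by norm_num)
  rcases m with _ | p
  · decide
  · have h2 : 5 * V (p + 3) = (3 * (p + 2) + 8) * U (p + 3) + (p + 4) * U (p + 2) :=
      V_closed (p + 2)
    have h1 : 5 * V (p + 2) = (3 * (p + 1) + 8) * U (p + 2) + (p + 3) * U (p + 1) :=
      V_closed (p + 1)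
    have h0 : 5 * V (p + 1) = (3 * p + 8) * U (p + 1) + (p + 2) * U p := V_closed p
    have r3 : U (p + 3) = U (p + 2) + U (p + 1) := U_rec (p + 1)
    have r2 : U (p + 2) = U (p + 1) + U p := U_rec p
    rw [r3, r2] at h2
    rw [r2] at h1
    have goal : 5 * ((p + 3) * V (p + 3)) = 5 * ((p + 4) * V (p + 2) + (p + 5) * V (p + 1)) := by
      zify at h2 h1 h0 ⊢
      linear_combination (p + 3) * h2 - (p + 4) * h1 - (p + 5) * h0
    convert goal using 2
end

section
/- For all integers n ≥ 4, the sequence v satisfies the fourth-order constant-coefficient linear recurrence v_n = 2·v_{n-1} + v_{n-2} - 2·v_{n-3} - v_{n-4}. -/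
lemma choose_diag_zero (n k : ℕ) (h : n / 2 < k) : (n - k).choose k = 0 := by
  apply Nat.choose_eq_zero_of_lt; omega

/-- Extend/truncate a diagonal-binomial-weighted sum: extra terms vanish. -/
lemma sum_ext (g : ℕ → ℕ) (n m1 m2 : ℕ) (h1 : n / 2 < m1) (h2 : m1 ≤ m2) :
    ∑ k ∈ Finset.range m2, (n - k).choose k * g k
      = ∑ k ∈ Finset.range m1, (n - k).choose k * g k := by
  rw [← Finset.sum_subset (Finset.range_subset_range.mpr h2)]
  intro x hx hx'
  simp only [Finset.mem_range] at hx hx'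
  rw [choose_diag_zero n x (by omega), zero_mul]

lemma fib_sum (n m : ℕ) (h : n / 2 < m) :
    ∑ k ∈ Finset.range m, (n - k).choose k = Nat.fib (n + 1) := by
  have h0 : ∑ k ∈ Finset.range m, (n - k).choose k
      = ∑ k ∈ Finset.range (n + 1), (n - k).choose k := by
    have := sum_ext (fun _ => 1) n (min m (n+1)) m (by omega) (by omega)
    have := sum_ext (fun _ => 1) n (min m (n+1)) (n+1) (by omega) (by omega)
    simp only [mul_one] at *
    omega
  rw [h0, Nat.fib_succ_eq_sum_choose,
    Finset.Nat.sum_antidiagonal_eq_sum_range_succ_mk]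
  rw [← Finset.sum_range_reflect (fun k => Nat.choose k (n - k)) (n+1)]
  apply Finset.sum_congr rfl
  intro i hi
  simp only [Finset.mem_range] at hi
  congr 1 <;> omega

lemma v_ext (n m : ℕ) (h : n / 2 < m) :
    ∑ k ∈ Finset.range m, (n - k).choose k * (n - k + 1) = v n := by
  rw [v]
  exact sum_ext (fun k => n - k + 1) n (n/2+1) m (by omega) (by omega)

lemma key (n : ℕ) : v (n + 2) = v (n + 1) + v n + Nat.fib (n + 3) := by
  have hdiv : (n + 2) / 2 = n / 2 + 1 := by omega
  have hA : v (n + 2)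
      = (∑ i ∈ Finset.range (n/2+1),
          ((n + 2 - (i+1)).choose (i+1) * (n + 2 - (i+1) + 1)))
        + (n + 2 - 0).choose 0 * (n + 2 - 0 + 1) := by
    rw [v, hdiv, Finset.sum_range_succ' (fun k => (n + 2 - k).choose k * (n + 2 - k + 1))]
  have hsummand : ∀ i ∈ Finset.range (n/2+1),
      (n + 2 - (i+1)).choose (i+1) * (n + 2 - (i+1) + 1)
        = ((n - i).choose i * (n - i + 1) + (n - i).choose i)
          + ((n - i).choose (i+1) * (n + 1 - i) + (n - i).choose (i+1)) := by
    intro i hi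
    simp only [Finset.mem_range] at hi
    have h1 : n + 2 - (i+1) = (n - i) + 1 := by omega
    have h3 : n + 1 - i = (n - i) + 1 := by omega
    rw [h1, h3, Nat.choose_succ_succ]
    ring
  rw [Finset.sum_congr rfl hsummand] at hA
  rw [Finset.sum_add_distrib, Finset.sum_add_distrib, Finset.sum_add_distrib] at hA
  have hSa : ∑ i ∈ Finset.range (n/2+1), (n - i).choose i * (n - i + 1) = v n :=
    v_ext n (n/2+1) (by omega)
  have hSb : ∑ i ∈ Finset.range (n/2+1), (n - i).choose i = Nat.fib (n + 1) :=
    fib_sum n (n/2+1) (by omega)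
  -- v (n+1) related sum
  have hC : v (n + 1)
      = (∑ i ∈ Finset.range (n/2+1),
          ((n + 1 - (i+1)).choose (i+1) * (n + 1 - (i+1) + 1)))
        + (n + 1 - 0).choose 0 * (n + 1 - 0 + 1) := by
    rw [← v_ext (n+1) (n/2+2) (by omega),
      Finset.sum_range_succ' (fun k => (n + 1 - k).choose k * (n + 1 - k + 1))]
  have hC' : ∀ i ∈ Finset.range (n/2+1),
      (n + 1 - (i+1)).choose (i+1) * (n + 1 - (i+1) + 1)
        = (n - i).choose (i+1) * (n + 1 - i) := by
    intro i hi
    simp only [Finset.mem_range] at hi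
    have h1 : n + 1 - (i+1) = n - i := by omega
    have h2 : n - i + 1 = n + 1 - i := by omega
    rw [h1, h2]
  rw [Finset.sum_congr rfl hC'] at hC
  -- fib (n+2) related sum
  have hD : Nat.fib (n + 2)
      = (∑ i ∈ Finset.range (n/2+1), (n + 1 - (i+1)).choose (i+1))
        + (n + 1 - 0).choose 0 := by
    rw [← fib_sum (n+1) (n/2+2) (by omega),
      Finset.sum_range_succ' (fun k => (n + 1 - k).choose k)]
  have hD' : ∀ i ∈ Finset.range (n/2+1),
      (n + 1 - (i+1)).choose (i+1) = (n - i).choose (i+1) := by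
    intro i hi
    simp only [Finset.mem_range] at hi
    congr 1
    omega
  rw [Finset.sum_congr rfl hD'] at hD
  have hfib : Nat.fib (n + 3) = Nat.fib (n + 2) + Nat.fib (n + 1) := by
    rw [show n + 3 = (n + 1) + 2 by ring, Nat.fib_add_two,
      show n + 1 + 1 = n + 2 by ring]
    omega
  simp only [Nat.choose_zero_right, Nat.sub_zero, one_mul] at hA hC hD
  omega

theorem stmt_1 : ∀ n : ℕ, 4 ≤ n →
    (v n : ℤ) = 2 * v (n - 1) + v (n - 2) - 2 * v (n - 3) - v (n - 4) := by
  intro n hn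
  obtain ⟨m, rfl⟩ : ∃ m, n = m + 4 := ⟨n - 4, by omega⟩
  have e1 : m + 4 - 1 = m + 3 := by omega
  have e2 : m + 4 - 2 = m + 2 := by omega
  have e3 : m + 4 - 3 = m + 1 := by omega
  have e4 : m + 4 - 4 = m := by omega
  rw [e1, e2, e3, e4]
  have k1 := key (m + 2)
  have k2 := key (m + 1)
  have k3 := key m
  rw [show m + 2 + 2 = m + 4 by ring, show m + 2 + 1 = m + 3 by ring,
    show m + 2 + 3 = m + 5 by ring] at k1
  rw [show m + 1 + 2 = m + 3 by ring, show m + 1 + 1 = m + 2 by ring,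
    show m + 1 + 3 = m + 4 by ring] at k2
  have hfib : Nat.fib (m + 5) = Nat.fib (m + 4) + Nat.fib (m + 3) := by
    rw [show m + 5 = (m + 3) + 2 by ring, Nat.fib_add_two,
      show m + 3 + 1 = m + 4 by ring]
    omega
  push_cast
  omega
end

section
/- For all integers n ≥ 0, 5·v_n = 2(n+2)·F_{n+1} + (n+1)·F_{n+2}. -/
open Finset

/-- The same sum extended to `range (n+1)`; extra terms vanish. -/
def w (n : ℕ) : ℕ := ∑ k ∈ Finset.range (n + 1), (n - k).choose k * (n - k + 1)

lemma v_eq_w (n : ℕ) : v n = w n := by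
  refine Finset.sum_subset (Finset.range_subset_range.mpr (by omega)) ?_
  intro k hk hk'
  simp only [Finset.mem_range] at hk hk'
  have h : n - k < k := by omega
  simp [Nat.choose_eq_zero_of_lt h]

lemma fibsum (n : ℕ) : ∑ k ∈ Finset.range (n + 1), (n - k).choose k = Nat.fib (n + 1) := by
  have h := Finset.Nat.sum_antidiagonal_eq_sum_range_succ_mk
    (f := fun p : ℕ × ℕ => Nat.choose p.1 p.2) n
  rw [Nat.fib_succ_eq_sum_choose, h, ← Finset.sum_range_reflect]
  refine Finset.sum_congr rfl ?_
  intro j hj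
  simp only [Finset.mem_range] at hj
  have h1 : n + 1 - 1 - j = n - j := by omega
  have h2 : n - (n - j) = j := by omega
  rw [h1, h2]

lemma w_rec (n : ℕ) : w (n + 2) = w (n + 1) + w n + Nat.fib (n + 3) := by
  have hsplit : w (n + 2)
      = ∑ k ∈ Finset.range (n + 2), (n + 1 - k).choose (k + 1) * (n + 2 - k) + (n + 3) := by
    rw [w, Finset.sum_range_succ']
    congr 1
    · refine Finset.sum_congr rfl ?_
      intro k hk
      simp only [Finset.mem_range] at hk
      have h1 : n + 2 - (k + 1) = n + 1 - k := by omega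
      have h2 : n + 2 - (k + 1) + 1 = n + 2 - k := by omega
      rw [h2, h1]
    · simp
  have hpt : ∀ k ∈ Finset.range (n + 2),
      (n + 1 - k).choose (k + 1) * (n + 2 - k)
        = ((n - k).choose k * (n - k + 1) + (n - k).choose k)
          + (n - k).choose (k + 1) * (n + 2 - k) := by
    intro k hk
    simp only [Finset.mem_range] at hk
    rcases Nat.lt_or_ge k (n + 1) with h | h
    · have h1 : n + 1 - k = (n - k) + 1 := by omega
      have h2 : n + 2 - k = (n - k + 1) + 1 := by omega
      rw [h1, h2, Nat.choose_succ_succ]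
      ring
    · have hk1 : k = n + 1 := by omega
      subst hk1
      have h0 : n - (n + 1) = 0 := by omega
      rw [h0]
      simp [Nat.choose_eq_zero_of_lt]
  have hA : ∑ k ∈ Finset.range (n + 2), (n - k).choose (k + 1) * (n + 2 - k) + (n + 3)
      = w (n + 1) + Nat.fib (n + 2) := by
    have hT : ∑ i ∈ Finset.range (n + 3), (n + 1 - i).choose i * (n + 3 - i)
        = ∑ k ∈ Finset.range (n + 2), (n - k).choose (k + 1) * (n + 2 - k) + (n + 3) := by
      rw [Finset.sum_range_succ']
      congr 1
      · refine Finset.sum_congr rfl ?_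
        intro k hk
        simp only [Finset.mem_range] at hk
        have h1 : n + 1 - (k + 1) = n - k := by omega
        have h2 : n + 3 - (k + 1) = n + 2 - k := by omega
        rw [h1, h2]
      · simp
    have hT2 : ∑ i ∈ Finset.range (n + 3), (n + 1 - i).choose i * (n + 3 - i)
        = w (n + 1) + Nat.fib (n + 2) := by
      have hp : ∀ i ∈ Finset.range (n + 3),
          (n + 1 - i).choose i * (n + 3 - i)
            = (n + 1 - i).choose i * (n + 1 - i + 1) + (n + 1 - i).choose i := by
        intro i hi
        simp only [Finset.mem_range] at hi
        rcases Nat.lt_or_ge i (n + 2) with h | h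
        · have h2 : n + 3 - i = (n + 1 - i + 1) + 1 := by omega
          rw [h2]; ring
        · have hi1 : i = n + 2 := by omega
          subst hi1
          have h0 : n + 1 - (n + 2) = 0 := by omega
          rw [h0]
          simp [Nat.choose_eq_zero_of_lt]
      rw [Finset.sum_congr rfl hp, Finset.sum_add_distrib]
      congr 1
      · rw [w, Finset.sum_range_succ]
        have h0 : n + 1 - (n + 2) = 0 := by omega
        rw [h0]
        simp [Nat.choose_eq_zero_of_lt]
      · rw [Finset.sum_range_succ]
        have h0 : n + 1 - (n + 2) = 0 := by omega
        rw [h0]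
        simp only [Nat.choose_eq_zero_of_lt (by omega : (0:ℕ) < n + 2), add_zero]
        exact fibsum (n + 1)
    omega
  have hB : ∑ k ∈ Finset.range (n + 2), ((n - k).choose k * (n - k + 1) + (n - k).choose k)
      = w n + Nat.fib (n + 1) := by
    rw [Finset.sum_add_distrib]
    congr 1
    · rw [w, Finset.sum_range_succ]
      have h0 : n - (n + 1) = 0 := by omega
      rw [h0]
      simp [Nat.choose_eq_zero_of_lt]
    · rw [Finset.sum_range_succ]
      have h0 : n - (n + 1) = 0 := by omega
      rw [h0]
      simp only [Nat.choose_eq_zero_of_lt (by omega : (0:ℕ) < n + 1), add_zero]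
      exact fibsum n
  rw [hsplit, Finset.sum_congr rfl hpt, Finset.sum_add_distrib]
  have hfib : Nat.fib (n + 3) = Nat.fib (n + 1) + Nat.fib (n + 2) := by
    rw [Nat.fib_add_two]
  omega

theorem stmt_2 : ∀ n : ℕ,
    5 * v n = 2 * (n + 2) * Nat.fib (n + 1) + (n + 1) * Nat.fib (n + 2) := by
  have key : ∀ n : ℕ, 5 * w n = 2 * (n + 2) * Nat.fib (n + 1) + (n + 1) * Nat.fib (n + 2) := by
    intro n
    induction n using Nat.strong_induction_on with
    | _ n ih =>
      match n with
      | 0 => simp [w]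
      | 1 => simp [w, Finset.sum_range_succ]; decide
      | (m + 2) =>
        have ih1 := ih (m + 1) (by omega)
        have ih2 := ih m (by omega)
        have hc : Nat.fib (m + 3) = Nat.fib (m + 1) + Nat.fib (m + 2) := by
          rw [Nat.fib_add_two]
        have hd : Nat.fib (m + 4) = Nat.fib (m + 1) + 2 * Nat.fib (m + 2) := by
          have h1 : Nat.fib (m + 4) = Nat.fib (m + 2) + Nat.fib (m + 3) := by
            rw [show m + 4 = m + 2 + 2 from by omega]
            exact Nat.fib_add_two
          omega
        have e1 : m + 1 + 2 = m + 3 := by omega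
        have e2 : m + 1 + 1 = m + 2 := by omega
        rw [e1, e2] at ih1
        calc 5 * w (m + 2) = 5 * w (m + 1) + 5 * w m + 5 * Nat.fib (m + 3) := by
              rw [w_rec]; ring
          _ = (2 * (m + 3) * Nat.fib (m + 2) + (m + 2) * Nat.fib (m + 3))
              + (2 * (m + 2) * Nat.fib (m + 1) + (m + 1) * Nat.fib (m + 2))
              + 5 * Nat.fib (m + 3) := by rw [ih1, ih2]
          _ = 2 * (m + 2 + 2) * Nat.fib (m + 2 + 1) + (m + 2 + 1) * Nat.fib (m + 2 + 2) := by
              have e3 : m + 2 + 1 = m + 3 := by omega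
              have e4 : m + 2 + 2 = m + 4 := by omega
              rw [e3, e4, hc, hd]; ring
  intro n
  rw [v_eq_w]
  exact key n
end

section
/- For all integers n ≥ 3, the sequence r satisfies the third-order recurrence r_n = 3·r_{n-1} + r_{n-2} - r_{n-3}. -/
/-! The equations for `r` at `n` and `n - 1` and for `c` at `n` eliminate `a`, `c` and `d`,
leaving `r n + r (n - 3) = 3 r (n - 1) + r (n - 2)`, an identity in `ℕ` free of subtraction. -/

theorem tiling_count_add_three_add (r a c d : ℕ → ℕ)
    (hr : ∀ n : ℕ, 2 ≤ n → r n = r (n - 1) + a n + c n + d n)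
    (ha : ∀ n : ℕ, 2 ≤ n → a n = c (n - 1))
    (hc : ∀ n : ℕ, 2 ≤ n → c n = r (n - 1) + a (n - 1) + d n)
    (hd : ∀ n : ℕ, 2 ≤ n → d n = r (n - 2)) (m : ℕ) :
    r (m + 3) + r m = 3 * r (m + 2) + r (m + 1) := by
  have hr₃ := hr (m + 3) (by omega)
  have hr₂ := hr (m + 2) (by omega)
  have hc₃ := hc (m + 3) (by omega)
  have ha₃ := ha (m + 3) (by omega)
  have ha₂ := ha (m + 2) (by omega)
  have hd₃ := hd (m + 3) (by omega)
  have hd₂ := hd (m + 2) (by omega)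
  simp only [show m + 3 - 1 = m + 2 by omega, show m + 3 - 2 = m + 1 by omega,
    show m + 2 - 1 = m + 1 by omega, show m + 2 - 2 = m by omega] at hr₃ hr₂ hc₃ ha₃ ha₂ hd₃ hd₂
  omega

theorem stmt_8_general (r a c d : ℕ → ℕ)
    (hr : ∀ n : ℕ, 2 ≤ n → r n = r (n - 1) + a n + c n + d n)
    (ha : ∀ n : ℕ, 2 ≤ n → a n = c (n - 1))
    (hc : ∀ n : ℕ, 2 ≤ n → c n = r (n - 1) + a (n - 1) + d n)
    (hd : ∀ n : ℕ, 2 ≤ n → d n = r (n - 2)) :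
    ∀ n : ℕ, 3 ≤ n → (r n : ℤ) = 3 * r (n - 1) + r (n - 2) - r (n - 3) := by
  intro n hn
  obtain ⟨m, rfl⟩ := Nat.exists_eq_add_of_le' hn
  have key := tiling_count_add_three_add r a c d hr ha hc hd m
  rw [show m + 3 - 1 = m + 2 by omega, show m + 3 - 2 = m + 1 by omega,
    show m + 3 - 3 = m by omega]
  omega

theorem stmt_8 (r a c d : ℕ → ℕ)
    (hr : ∀ n : ℕ, 2 ≤ n → r n = r (n - 1) + a n + c n + d n)
    (ha : ∀ n : ℕ, 2 ≤ n → a n = c (n - 1))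
    (hc : ∀ n : ℕ, 2 ≤ n → c n = r (n - 1) + a (n - 1) + d n)
    (hd : ∀ n : ℕ, 2 ≤ n → d n = r (n - 2))
    (ha0 : a 0 = 0) (hc0 : c 0 = 0) (hd0 : d 0 = 0)
    (ha1 : a 1 = 0) (hd1 : d 1 = 0)
    (hr0 : r 0 = 1) (hr1 : r 1 = 2) (hc1 : c 1 = 1) :
    ∀ n : ℕ, 3 ≤ n → (r n : ℤ) = 3 * r (n - 1) + r (n - 2) - r (n - 3) :=
  stmt_8_general r a c d hr ha hc hd
end

section
/- For all integers n ≥ 0, r_n = c_{n+1} - c_n. -/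
/-! Unfolding `c` once through `a` and `d` gives `c (n + 3) = r (n + 2) + (c (n + 1) + r (n + 1))`,
so the claim `c (n + 1) = r n + c n` propagates from `n + 1` to `n + 2`; the first two cases are
read off the initial values. -/

theorem succ_eq_add_of_recurrence {M : Type*} [AddCommSemigroup M] {r c : ℕ → M}
    (h₀ : c 1 = r 0 + c 0) (h₁ : c 2 = r 1 + c 1)
    (hrec : ∀ n, c (n + 3) = r (n + 2) + (c (n + 1) + r (n + 1))) :
    ∀ n, c (n + 1) = r n + c n
  | 0 => h₀
  | 1 => h₁
  | n + 2 => by rw [hrec, succ_eq_add_of_recurrence h₀ h₁ hrec (n + 1), add_comm (r (n + 1))]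

theorem stmt_9_general (r a c d : ℕ → ℕ)
    (ha : ∀ n : ℕ, 2 ≤ n → a n = c (n - 1))
    (hc : ∀ n : ℕ, 2 ≤ n → c n = r (n - 1) + a (n - 1) + d n)
    (hd : ∀ n : ℕ, 2 ≤ n → d n = r (n - 2))
    (hc0 : c 0 = 0)
    (ha1 : a 1 = 0)
    (hr0 : r 0 = 1) (hc1 : c 1 = 1) :
    ∀ n : ℕ, (r n : ℤ) = c (n + 1) - c n := by
  have h₁ : c 2 = r 1 + c 1 := by
    have := hc 2 le_rfl
    have := hd 2 le_rfl
    simp_all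
  have hrec : ∀ n, c (n + 3) = r (n + 2) + (c (n + 1) + r (n + 1)) := fun n => by
    have := hc (n + 3) (by omega)
    have := ha (n + 2) (by omega)
    have := hd (n + 3) (by omega)
    simp_all [add_assoc]
  intro n
  rw [succ_eq_add_of_recurrence (by omega) h₁ hrec n]
  push_cast
  ring

theorem stmt_9 (r a c d : ℕ → ℕ)
    (hr : ∀ n : ℕ, 2 ≤ n → r n = r (n - 1) + a n + c n + d n)
    (ha : ∀ n : ℕ, 2 ≤ n → a n = c (n - 1))
    (hc : ∀ n : ℕ, 2 ≤ n → c n = r (n - 1) + a (n - 1) + d n)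
    (hd : ∀ n : ℕ, 2 ≤ n → d n = r (n - 2))
    (ha0 : a 0 = 0) (hc0 : c 0 = 0) (hd0 : d 0 = 0)
    (ha1 : a 1 = 0) (hd1 : d 1 = 0)
    (hr0 : r 0 = 1) (hr1 : r 1 = 2) (hc1 : c 1 = 1) :
    ∀ n : ℕ, (r n : ℤ) = c (n + 1) - c n :=
  stmt_9_general r a c d ha hc hd hc0 ha1 hr0 hc1
end

section
/- For all integers n ≥ 3, the sequence c satisfies the third-order recurrence c_n = 3·c_{n-1} + c_{n-2} - c_{n-3}. -/
/-!
Eliminating `a` and `d` from the equation for `c` gives `c (n + 1) = c n + r n`, i.e. `r` is the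
difference sequence of `c`. Substituting this into the equation for `r` (again after eliminating
`a` and `d`) turns it into a recurrence for `c` alone.
-/

section TilingRecurrence

variable {r a c d : ℕ → ℕ}

theorem c_succ_eq_add_r
    (ha : ∀ n : ℕ, 2 ≤ n → a n = c (n - 1))
    (hc : ∀ n : ℕ, 2 ≤ n → c n = r (n - 1) + a (n - 1) + d n)
    (hd : ∀ n : ℕ, 2 ≤ n → d n = r (n - 2))
    (h₀ : c 1 = c 0 + r 0) (h₁ : c 2 = c 1 + r 1) :
    ∀ m : ℕ, c (m + 1) = c m + r m
  | 0 => h₀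
  | 1 => h₁
  | m + 2 => by
    have ih : c (m + 2) = c (m + 1) + r (m + 1) := c_succ_eq_add_r ha hc hd h₀ h₁ (m + 1)
    have hc' : c (m + 3) = r (m + 2) + a (m + 2) + d (m + 3) := hc (m + 3) (by omega)
    have ha' : a (m + 2) = c (m + 1) := ha (m + 2) (by omega)
    have hd' : d (m + 3) = r (m + 1) := hd (m + 3) (by omega)
    show c (m + 3) = c (m + 2) + r (m + 2)
    omega

theorem c_add_three_eq
    (hr : ∀ n : ℕ, 2 ≤ n → r n = r (n - 1) + a n + c n + d n)
    (ha : ∀ n : ℕ, 2 ≤ n → a n = c (n - 1))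
    (hd : ∀ n : ℕ, 2 ≤ n → d n = r (n - 2))
    (hcr : ∀ m : ℕ, c (m + 1) = c m + r m) (m : ℕ) :
    (c (m + 3) : ℤ) = 3 * c (m + 2) + c (m + 1) - c m := by
  have hr' : r (m + 2) = r (m + 1) + a (m + 2) + c (m + 2) + d (m + 2) := hr (m + 2) (by omega)
  have ha' : a (m + 2) = c (m + 1) := ha (m + 2) (by omega)
  have hd' : d (m + 2) = r m := hd (m + 2) (by omega)
  have h₀ : c (m + 1) = c m + r m := hcr m
  have h₁ : c (m + 2) = c (m + 1) + r (m + 1) := hcr (m + 1)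
  have h₂ : c (m + 3) = c (m + 2) + r (m + 2) := hcr (m + 2)
  omega

end TilingRecurrence

theorem stmt_10_general (r a c d : ℕ → ℕ)
    (hr : ∀ n : ℕ, 2 ≤ n → r n = r (n - 1) + a n + c n + d n)
    (ha : ∀ n : ℕ, 2 ≤ n → a n = c (n - 1))
    (hc : ∀ n : ℕ, 2 ≤ n → c n = r (n - 1) + a (n - 1) + d n)
    (hd : ∀ n : ℕ, 2 ≤ n → d n = r (n - 2))
    (hc0 : c 0 = 0)
    (ha1 : a 1 = 0)
    (hr0 : r 0 = 1) (hc1 : c 1 = 1) :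
    ∀ n : ℕ, 3 ≤ n → (c n : ℤ) = 3 * c (n - 1) + c (n - 2) - c (n - 3) := by
  have h₀ : c 1 = c 0 + r 0 := by rw [hc0, hr0, hc1]
  have h₁ : c 2 = c 1 + r 1 := by
    rw [hc 2 le_rfl, hd 2 le_rfl]
    simp only [Nat.reduceSub, ha1, hc1, hr0]
    omega
  intro n hn
  obtain ⟨m, rfl⟩ : ∃ m, n = m + 3 := ⟨n - 3, by omega⟩
  simpa using c_add_three_eq hr ha hd (c_succ_eq_add_r ha hc hd h₀ h₁) m

theorem stmt_10 (r a c d : ℕ → ℕ)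
    (hr : ∀ n : ℕ, 2 ≤ n → r n = r (n - 1) + a n + c n + d n)
    (ha : ∀ n : ℕ, 2 ≤ n → a n = c (n - 1))
    (hc : ∀ n : ℕ, 2 ≤ n → c n = r (n - 1) + a (n - 1) + d n)
    (hd : ∀ n : ℕ, 2 ≤ n → d n = r (n - 2))
    (ha0 : a 0 = 0) (hc0 : c 0 = 0) (hd0 : d 0 = 0)
    (ha1 : a 1 = 0) (hd1 : d 1 = 0)
    (hr0 : r 0 = 1) (hr1 : r 1 = 2) (hc1 : c 1 = 1) :
    ∀ n : ℕ, 3 ≤ n → (c n : ℤ) = 3 * c (n - 1) + c (n - 2) - c (n - 3) :=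
  stmt_10_general r a c d hr ha hc hd hc0 ha1 hr0 hc1
end

section
/- Define w_n = R2_n. Then for all integers n ≥ 9, w satisfies the ninth-order linear recurrence w_n = 8·w_{n-1} - 17·w_{n-2} - 7·w_{n-3} + 41·w_{n-4} + w_{n-5} - 23·w_{n-6} + 3·w_{n-7} + 4·w_{n-8} - w_{n-9} (as an identity of integers). -/
/-!
Eliminating `a`, `d`, `A2`, `A1`, `D2`, `D1` turns the system into a second-order linear
recurrence `x (n + 2) = M₁ x (n + 1) + M₂ x n` for the vector `x n = (r, c, R2, R1, C2, C1) n`.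
A linear relation with constant coefficients among `x n, …, x (n + 9)` is carried from the
positions `n`, `n + 1` to `n + 2` by applying `M₁` and `M₂`, so it holds for every `n` once it
holds for `n = 0, 1`, which is a finite computation from the initial values.
-/

open Finset Matrix

theorem sum_smul_shift_eq_zero_of_two_step {R M : Type*} [Semiring R] [AddCommMonoid M]
    [Module R M] (A B : M →ₗ[R] M) {x : ℕ → M} (hx : ∀ n, x (n + 2) = A (x (n + 1)) + B (x n))
    {k : ℕ} (c : Fin k → R) (h₀ : ∑ i, c i • x i = 0) (h₁ : ∑ i, c i • x (i + 1) = 0) (n : ℕ) :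
    ∑ i, c i • x (n + i) = 0 := by
  induction n using Nat.twoStepInduction with
  | zero => simpa using h₀
  | one => simpa [add_comm] using h₁
  | more n ih₀ ih₁ =>
    have step (i : ℕ) : x (n + 2 + i) = A (x (n + 1 + i)) + B (x (n + i)) := by
      rw [add_right_comm, hx, add_right_comm]
    simp only [step, smul_add, sum_add_distrib, ← map_smul, ← map_sum, ih₀, ih₁, map_zero,
      add_zero]

def walkVector (r c R2 R1 C2 C1 : ℕ → ℕ) (n : ℕ) : Fin 6 → ℤ :=
  ![r n, c n, R2 n, R1 n, C2 n, C1 n]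

-- Obtained by eliminating `a`, `d`, `A2`, `A1`, `D2`, `D1`; see `walkVector_add_two`.
def walkMatrix₁ : Matrix (Fin 6) (Fin 6) ℤ :=
  !![2, 1, 0, 0, 0, 0;
     1, 0, 0, 0, 0, 0;
     2, 1, 2, 1, 1, 1;
     2, 1, 0, 1, 0, 1;
     0, 0, 1, 1, 0, 0;
     0, 0, 0, 1, 0, 0]

def walkMatrix₂ : Matrix (Fin 6) (Fin 6) ℤ :=
  !![2, 1, 0, 0, 0, 0;
     1, 1, 0, 0, 0, 0;
     3, 2, 2, 2, 1, 1;
     3, 2, 0, 2, 0, 1;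
     1, 1, 1, 1, 1, 1;
     1, 1, 0, 1, 0, 1]

theorem walkVector_add_two {r a c d R2 R1 A2 A1 C2 C1 D2 D1 : ℕ → ℕ}
    (hr : ∀ n : ℕ, 2 ≤ n → r n = r (n - 1) + a n + c n + d n)
    (ha : ∀ n : ℕ, 2 ≤ n → a n = c (n - 1))
    (hc : ∀ n : ℕ, 2 ≤ n → c n = r (n - 1) + a (n - 1) + d n)
    (hd : ∀ n : ℕ, 2 ≤ n → d n = r (n - 2))
    (hc0 : c 0 = 0) (ha1 : a 1 = 0)
    (hR2 : ∀ n : ℕ, 2 ≤ n →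
      R2 n = (R2 (n - 1) + r (n - 1)) + (A2 n + A1 n) + (C2 n + c n) + (D2 n + d n))
    (hR1 : ∀ n : ℕ, 2 ≤ n →
      R1 n = r (n - 1) + A1 n + (C1 n + c n) + (D1 n + d n))
    (hA2 : ∀ n : ℕ, 2 ≤ n → A2 n = C2 (n - 1))
    (hA1 : ∀ n : ℕ, 2 ≤ n → A1 n = C1 (n - 1) + c (n - 1))
    (hC2 : ∀ n : ℕ, 2 ≤ n →
      C2 n = (R2 (n - 1) + R1 (n - 1)) + (A2 (n - 1) + A1 (n - 1)) + (D2 n + d n))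
    (hC1 : ∀ n : ℕ, 2 ≤ n → C1 n = R1 (n - 1) + A1 (n - 1) + (D1 n + d n))
    (hD2 : ∀ n : ℕ, 2 ≤ n → D2 n = R2 (n - 2) + R1 (n - 2))
    (hD1 : ∀ n : ℕ, 2 ≤ n → D1 n = R1 (n - 2))
    (hC20 : C2 0 = 0) (hC10 : C1 0 = 0) (hA21 : A2 1 = 0) (hA11 : A1 1 = 0) (n : ℕ) :
    walkVector r c R2 R1 C2 C1 (n + 2) =
      walkMatrix₁ *ᵥ walkVector r c R2 R1 C2 C1 (n + 1) +
        walkMatrix₂ *ᵥ walkVector r c R2 R1 C2 C1 n := by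
  have hac : ∀ m, a (m + 1) = c m
    | 0 => by rw [ha1, hc0]
    | m + 1 => ha (m + 2) (by omega)
  have hA2C2 : ∀ m, A2 (m + 1) = C2 m
    | 0 => by rw [hA21, hC20]
    | m + 1 => hA2 (m + 2) (by omega)
  have hA1C1 : ∀ m, A1 (m + 1) = C1 m + c m
    | 0 => by rw [hA11, hC10, hc0]
    | m + 1 => hA1 (m + 2) (by omega)
  have hd₂ : d (n + 2) = r n := hd (n + 2) (by omega)
  have hD2₂ : D2 (n + 2) = R2 n + R1 n := hD2 (n + 2) (by omega)
  have hD1₂ : D1 (n + 2) = R1 n := hD1 (n + 2) (by omega)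
  have hc₂ : c (n + 2) = r (n + 1) + a (n + 1) + d (n + 2) := hc (n + 2) (by omega)
  have hr₂ : r (n + 2) = r (n + 1) + a (n + 2) + c (n + 2) + d (n + 2) := hr (n + 2) (by omega)
  have hC2₂ : C2 (n + 2) = R2 (n + 1) + R1 (n + 1) + (A2 (n + 1) + A1 (n + 1)) +
      (D2 (n + 2) + d (n + 2)) := hC2 (n + 2) (by omega)
  have hC1₂ : C1 (n + 2) = R1 (n + 1) + A1 (n + 1) + (D1 (n + 2) + d (n + 2)) :=
    hC1 (n + 2) (by omega)
  have hR2₂ : R2 (n + 2) = R2 (n + 1) + r (n + 1) + (A2 (n + 2) + A1 (n + 2)) +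
      (C2 (n + 2) + c (n + 2)) + (D2 (n + 2) + d (n + 2)) := hR2 (n + 2) (by omega)
  have hR1₂ : R1 (n + 2) = r (n + 1) + A1 (n + 2) + (C1 (n + 2) + c (n + 2)) +
      (D1 (n + 2) + d (n + 2)) := hR1 (n + 2) (by omega)
  simp only [hac, hA2C2, hA1C1] at hc₂ hr₂ hC2₂ hC1₂ hR2₂ hR1₂
  ext i
  fin_cases i <;>
    simp [walkVector, walkMatrix₁, walkMatrix₂] <;>
    omega

-- The pairs `(x n, x (n + 1))`; iterating pairs keeps the evaluation by `decide` linear in `n`.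
def walkVectorPair : ℕ → (Fin 6 → ℤ) × (Fin 6 → ℤ)
  | 0 => (![1, 0, 1, 1, 0, 0], ![2, 1, 5, 3, 2, 1])
  | n + 1 => ((walkVectorPair n).2,
      walkMatrix₁ *ᵥ (walkVectorPair n).2 + walkMatrix₂ *ᵥ (walkVectorPair n).1)

-- The coefficient of `w (n + i)` in the recurrence.
def walkRecCoeff : Fin 10 → ℤ := ![1, -4, -3, 23, -1, -41, 7, 17, -8, 1]

theorem eq_walkVectorPair {x : ℕ → Fin 6 → ℤ}
    (hx : ∀ n, x (n + 2) = walkMatrix₁ *ᵥ x (n + 1) + walkMatrix₂ *ᵥ x n)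
    (h₀ : x 0 = ![1, 0, 1, 1, 0, 0]) (h₁ : x 1 = ![2, 1, 5, 3, 2, 1]) (n : ℕ) :
    (x n, x (n + 1)) = walkVectorPair n := by
  induction n with
  | zero => rw [h₀, h₁]; rfl
  | succ n ih => rw [walkVectorPair, ← ih, hx]

theorem sum_walkRecCoeff_smul_eq_zero {x : ℕ → Fin 6 → ℤ}
    (hx : ∀ n, x (n + 2) = walkMatrix₁ *ᵥ x (n + 1) + walkMatrix₂ *ᵥ x n)
    (h₀ : x 0 = ![1, 0, 1, 1, 0, 0]) (h₁ : x 1 = ![2, 1, 5, 3, 2, 1]) (n : ℕ) :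
    ∑ i, walkRecCoeff i • x (n + i) = 0 := by
  have hfst (i : ℕ) : x i = (walkVectorPair i).1 :=
    congrArg Prod.fst (eq_walkVectorPair hx h₀ h₁ i)
  have hsnd (i : ℕ) : x (i + 1) = (walkVectorPair i).2 :=
    congrArg Prod.snd (eq_walkVectorPair hx h₀ h₁ i)
  refine sum_smul_shift_eq_zero_of_two_step (mulVecLin walkMatrix₁) (mulVecLin walkMatrix₂) hx _
    ?_ ?_ n
  · simp only [hfst]
    decide
  · simp only [hsnd]
    decide

theorem stmt_11_general (r a c d R2 R1 A2 A1 C2 C1 D2 D1 w : ℕ → ℕ)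
    (hr : ∀ n : ℕ, 2 ≤ n → r n = r (n - 1) + a n + c n + d n)
    (ha : ∀ n : ℕ, 2 ≤ n → a n = c (n - 1))
    (hc : ∀ n : ℕ, 2 ≤ n → c n = r (n - 1) + a (n - 1) + d n)
    (hd : ∀ n : ℕ, 2 ≤ n → d n = r (n - 2))
    (hc0 : c 0 = 0)
    (ha1 : a 1 = 0)
    (hr0 : r 0 = 1) (hr1 : r 1 = 2) (hc1 : c 1 = 1)
    (hR2 : ∀ n : ℕ, 2 ≤ n →
      R2 n = (R2 (n - 1) + r (n - 1)) + (A2 n + A1 n) + (C2 n + c n) + (D2 n + d n))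
    (hR1 : ∀ n : ℕ, 2 ≤ n →
      R1 n = r (n - 1) + A1 n + (C1 n + c n) + (D1 n + d n))
    (hA2 : ∀ n : ℕ, 2 ≤ n → A2 n = C2 (n - 1))
    (hA1 : ∀ n : ℕ, 2 ≤ n → A1 n = C1 (n - 1) + c (n - 1))
    (hC2 : ∀ n : ℕ, 2 ≤ n →
      C2 n = (R2 (n - 1) + R1 (n - 1)) + (A2 (n - 1) + A1 (n - 1)) + (D2 n + d n))
    (hC1 : ∀ n : ℕ, 2 ≤ n → C1 n = R1 (n - 1) + A1 (n - 1) + (D1 n + d n))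
    (hD2 : ∀ n : ℕ, 2 ≤ n → D2 n = R2 (n - 2) + R1 (n - 2))
    (hD1 : ∀ n : ℕ, 2 ≤ n → D1 n = R1 (n - 2))
    (hR20 : R2 0 = 1) (hR10 : R1 0 = 1)
    (hC20 : C2 0 = 0) (hC10 : C1 0 = 0)
    (hR21 : R2 1 = 5) (hR11 : R1 1 = 3)
    (hA21 : A2 1 = 0) (hA11 : A1 1 = 0) (hC21 : C2 1 = 2) (hC11 : C1 1 = 1)
    (hw : ∀ n : ℕ, w n = R2 n) :
    ∀ n : ℕ, 9 ≤ n →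
      (w n : ℤ) = 8 * w (n - 1) - 17 * w (n - 2) - 7 * w (n - 3) + 41 * w (n - 4)
        + w (n - 5) - 23 * w (n - 6) + 3 * w (n - 7) + 4 * w (n - 8) - w (n - 9) := by
  intro n hn
  obtain ⟨m, rfl⟩ : ∃ m, n = m + 9 := ⟨n - 9, by omega⟩
  have hx := walkVector_add_two hr ha hc hd hc0 ha1 hR2 hR1 hA2 hA1 hC2 hC1 hD2 hD1 hC20 hC10
    hA21 hA11
  have hrel := congrFun (sum_walkRecCoeff_smul_eq_zero hx
    (by simp [walkVector, hr0, hc0, hR20, hR10, hC20, hC10])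
    (by simp [walkVector, hr1, hc1, hR21, hR11, hC21, hC11]) m) 2
  simp [Fin.sum_univ_succ, walkRecCoeff, walkVector] at hrel
  simp only [hw, Nat.reduceSubDiff]
  linarith

theorem stmt_11 (r a c d R2 R1 A2 A1 C2 C1 D2 D1 w : ℕ → ℕ)
    (hr : ∀ n : ℕ, 2 ≤ n → r n = r (n - 1) + a n + c n + d n)
    (ha : ∀ n : ℕ, 2 ≤ n → a n = c (n - 1))
    (hc : ∀ n : ℕ, 2 ≤ n → c n = r (n - 1) + a (n - 1) + d n)
    (hd : ∀ n : ℕ, 2 ≤ n → d n = r (n - 2))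
    (ha0 : a 0 = 0) (hc0 : c 0 = 0) (hd0 : d 0 = 0)
    (ha1 : a 1 = 0) (hd1 : d 1 = 0)
    (hr0 : r 0 = 1) (hr1 : r 1 = 2) (hc1 : c 1 = 1)
    (hR2 : ∀ n : ℕ, 2 ≤ n →
      R2 n = (R2 (n - 1) + r (n - 1)) + (A2 n + A1 n) + (C2 n + c n) + (D2 n + d n))
    (hR1 : ∀ n : ℕ, 2 ≤ n →
      R1 n = r (n - 1) + A1 n + (C1 n + c n) + (D1 n + d n))
    (hA2 : ∀ n : ℕ, 2 ≤ n → A2 n = C2 (n - 1))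
    (hA1 : ∀ n : ℕ, 2 ≤ n → A1 n = C1 (n - 1) + c (n - 1))
    (hC2 : ∀ n : ℕ, 2 ≤ n →
      C2 n = (R2 (n - 1) + R1 (n - 1)) + (A2 (n - 1) + A1 (n - 1)) + (D2 n + d n))
    (hC1 : ∀ n : ℕ, 2 ≤ n → C1 n = R1 (n - 1) + A1 (n - 1) + (D1 n + d n))
    (hD2 : ∀ n : ℕ, 2 ≤ n → D2 n = R2 (n - 2) + R1 (n - 2))
    (hD1 : ∀ n : ℕ, 2 ≤ n → D1 n = R1 (n - 2))
    (hR20 : R2 0 = 1) (hR10 : R1 0 = 1)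
    (hA20 : A2 0 = 0) (hA10 : A1 0 = 0) (hC20 : C2 0 = 0) (hC10 : C1 0 = 0)
    (hD20 : D2 0 = 0) (hD10 : D1 0 = 0)
    (hR21 : R2 1 = 5) (hR11 : R1 1 = 3)
    (hA21 : A2 1 = 0) (hA11 : A1 1 = 0) (hC21 : C2 1 = 2) (hC11 : C1 1 = 1)
    (hD21 : D2 1 = 0) (hD11 : D1 1 = 0)
    (hw : ∀ n : ℕ, w n = R2 n) :
    ∀ n : ℕ, 9 ≤ n →
      (w n : ℤ) = 8 * w (n - 1) - 17 * w (n - 2) - 7 * w (n - 3) + 41 * w (n - 4)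
        + w (n - 5) - 23 * w (n - 6) + 3 * w (n - 7) + 4 * w (n - 8) - w (n - 9) :=
  stmt_11_general r a c d R2 R1 A2 A1 C2 C1 D2 D1 w hr ha hc hd hc0 ha1 hr0 hr1 hc1 hR2 hR1 hA2 hA1
    hC2 hC1 hD2 hD1 hR20 hR10 hC20 hC10 hR21 hR11 hA21 hA11 hC21 hC11 hw
end

section
/- Define w_n = R2_n. Then for all integers n ≥ 6, w satisfies the sixth-order linear recurrence w_n = 2·w_{n-1} + 2·w_{n-2} - 4·w_{n-3} - 2·w_{n-4} + 2·w_{n-5} + w_{n-6} (as an identity of integers). -/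
/-!
The recurrences say that `r` is annihilated by the Fibonacci operator `x² - x - 1` (acting by
shifts), that `x² - 1` sends `R1` to a shift of `r`, and that `x² - x - 1` sends `R2` to `R1`
plus a shift of `r`. Hence `(x² - x - 1)(x² - 1)(x² - x - 1)` annihilates `R2`, and expanding
this product, `x⁶ - 2x⁵ - 2x⁴ + 4x³ + 2x² - 2x - 1`, gives the sixth-order recurrence.
-/

section ShiftOperators

variable {R : Type*} [CommRing R]

/-- The shift operator `x² - x - 1`. -/
def fibDiff (s : ℕ → R) (n : ℕ) : R := s (n + 2) - s (n + 1) - s n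

/-- The shift operator `x² - 1`. -/
def twoStepDiff (s : ℕ → R) (n : ℕ) : R := s (n + 2) - s n

theorem fibDiff_twoStepDiff_fibDiff (s : ℕ → R) (n : ℕ) :
    fibDiff (twoStepDiff (fibDiff s)) n =
      s (n + 6) - 2 * s (n + 5) - 2 * s (n + 4) + 4 * s (n + 3) + 2 * s (n + 2)
        - 2 * s (n + 1) - s n := by
  simp only [fibDiff, twoStepDiff]
  ring

theorem twoStepDiff_fibDiff_eq {r R1 R2 : ℕ → R}
    (hR1 : ∀ n, R1 (n + 2) = R1 n + r (n + 2))
    (hR2 : ∀ n, R2 (n + 2) = R2 (n + 1) + R2 n + R1 n + r (n + 2)) (n : ℕ) :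
    twoStepDiff (fibDiff R2) n = r (n + 4) := by
  simp only [twoStepDiff, fibDiff]
  linear_combination hR2 (n + 2) - hR2 n + hR1 n

theorem sixth_order_recurrence {r R1 R2 : ℕ → R}
    (hr : ∀ n, r (n + 2) = r (n + 1) + r n)
    (hR1 : ∀ n, R1 (n + 2) = R1 n + r (n + 2))
    (hR2 : ∀ n, R2 (n + 2) = R2 (n + 1) + R2 n + R1 n + r (n + 2)) (n : ℕ) :
    R2 (n + 6) = 2 * R2 (n + 5) + 2 * R2 (n + 4) - 4 * R2 (n + 3) - 2 * R2 (n + 2)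
      + 2 * R2 (n + 1) + R2 n := by
  have hzero : fibDiff (twoStepDiff (fibDiff R2)) n = 0 := by
    simp only [fibDiff, twoStepDiff_fibDiff_eq hR1 hR2]
    linear_combination hr (n + 4)
  rw [fibDiff_twoStepDiff_fibDiff] at hzero
  linear_combination hzero

end ShiftOperators

theorem stmt_13_general (r R1 R2 w : ℕ → ℕ)
    (hr : ∀ n : ℕ, 2 ≤ n → r n = r (n - 1) + r (n - 2))
    (hR1 : ∀ n : ℕ, 2 ≤ n → R1 n = R1 (n - 2) + r n)
    (hR2 : ∀ n : ℕ, 2 ≤ n → R2 n = R2 (n - 1) + R2 (n - 2) + R1 (n - 2) + r n)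
    (hw : ∀ n : ℕ, w n = R2 n) :
    ∀ n : ℕ, 6 ≤ n →
      (w n : ℤ) = 2 * w (n - 1) + 2 * w (n - 2) - 4 * w (n - 3) - 2 * w (n - 4)
        + 2 * w (n - 5) + w (n - 6) := by
  have hr' : ∀ n, (r (n + 2) : ℤ) = r (n + 1) + r n := fun n => by
    exact_mod_cast hr (n + 2) (by omega)
  have hR1' : ∀ n, (R1 (n + 2) : ℤ) = R1 n + r (n + 2) := fun n => by
    exact_mod_cast hR1 (n + 2) (by omega)
  have hR2' : ∀ n, (R2 (n + 2) : ℤ) = R2 (n + 1) + R2 n + R1 n + r (n + 2) := fun n => by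
    exact_mod_cast hR2 (n + 2) (by omega)
  intro n hn
  obtain ⟨m, rfl⟩ : ∃ m, n = m + 6 := ⟨n - 6, by omega⟩
  simp only [hw, Nat.add_sub_cancel, show m + 6 - 1 = m + 5 by omega,
    show m + 6 - 2 = m + 4 by omega, show m + 6 - 3 = m + 3 by omega,
    show m + 6 - 4 = m + 2 by omega, show m + 6 - 5 = m + 1 by omega]
  exact sixth_order_recurrence (r := fun k => (r k : ℤ)) (R1 := fun k => (R1 k : ℤ))
    (R2 := fun k => (R2 k : ℤ)) hr' hR1' hR2' m

theorem stmt_13 (r R1 R2 w : ℕ → ℕ)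
    (hr : ∀ n : ℕ, 2 ≤ n → r n = r (n - 1) + r (n - 2))
    (hR1 : ∀ n : ℕ, 2 ≤ n → R1 n = R1 (n - 2) + r n)
    (hR2 : ∀ n : ℕ, 2 ≤ n → R2 n = R2 (n - 1) + R2 (n - 2) + R1 (n - 2) + r n)
    (hr0 : r 0 = 1) (hr1 : r 1 = 1)
    (hR10 : R1 0 = 1) (hR11 : R1 1 = 1)
    (hR20 : R2 0 = 1) (hR21 : R2 1 = 2)
    (hw : ∀ n : ℕ, w n = R2 n) :
    ∀ n : ℕ, 6 ≤ n →
      (w n : ℤ) = 2 * w (n - 1) + 2 * w (n - 2) - 4 * w (n - 3) - 2 * w (n - 4)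
        + 2 * w (n - 5) + w (n - 6) :=
  stmt_13_general r R1 R2 w hr hR1 hR2 hw
end

section
/- For all integers n ≥ 0, 5·w_{2n} = 5 + (3 + 6n)·F_{2n} + 8n·F_{2n+1}. -/
/-!
`r` is the shifted Fibonacci sequence, `r n = F (n + 1)`, and telescoping `R1 (n + 2) = R1 n + F (n + 3)`
gives `R1 n = F (n + 2) - n % 2`. With these, the recurrence for `R2` is a Fibonacci recurrence with
polynomial forcing, and the ansatz `5 R2 n = 5 (1 - n % 2) + 3 (n + 1) F n + 4 n F (n + 1)`
is verified by two-step induction; the parity term is what keeps the constant part consistent.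
-/

open Nat

theorem eq_fib_succ_of_add_two {r : ℕ → ℕ} (hr : ∀ n, r (n + 2) = r (n + 1) + r n)
    (hr0 : r 0 = 1) (hr1 : r 1 = 1) (n : ℕ) : r n = fib (n + 1) := by
  induction n using Nat.twoStepInduction with
  | zero => simp [hr0]
  | one => simp [hr1]
  | more n ih₀ ih₁ => rw [hr, ih₀, ih₁, fib_add_two (n := n + 1), add_comm]

theorem add_mod_two_eq_fib_of_add_two {s : ℕ → ℕ} (hs : ∀ n, s (n + 2) = s n + fib (n + 3))
    (hs0 : s 0 = 1) (hs1 : s 1 = 1) (n : ℕ) : s n + n % 2 = fib (n + 2) := by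
  induction n using Nat.twoStepInduction with
  | zero => simp [hs0]
  | one => rw [hs1]; rfl
  | more n ih₀ _ =>
    rw [hs, Nat.add_mod_right, add_right_comm, ih₀, fib_add_two (n := n + 2)]

theorem five_mul_add_mod_two_eq {s t : ℕ → ℕ}
    (hs : ∀ n, s (n + 2) = s (n + 1) + s n + t n + fib (n + 3))
    (ht : ∀ n, t n + n % 2 = fib (n + 2)) (hs0 : s 0 = 1) (hs1 : s 1 = 2) (n : ℕ) :
    5 * s n + 5 * (n % 2) = 5 + 3 * (n + 1) * fib n + 4 * n * fib (n + 1) := by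
  induction n using Nat.twoStepInduction with
  | zero => simp [hs0]
  | one => simp [hs1]
  | more n ih₀ ih₁ =>
    have h2 : fib (n + 2) = fib n + fib (n + 1) := fib_add_two
    have h3 : fib (n + 3) = fib (n + 1) + fib (n + 2) := fib_add_two
    rw [Nat.add_mod_right]
    linear_combination 5 * hs n + ih₀ + ih₁ + 5 * ht n - 5 * Nat.mod_two_add_succ_mod_two n
      - (4 * n + 3) * h3 - (3 * n + 3) * h2

theorem stmt_14 (r R1 R2 w : ℕ → ℕ)
    (hr : ∀ n : ℕ, 2 ≤ n → r n = r (n - 1) + r (n - 2))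
    (hR1 : ∀ n : ℕ, 2 ≤ n → R1 n = R1 (n - 2) + r n)
    (hR2 : ∀ n : ℕ, 2 ≤ n → R2 n = R2 (n - 1) + R2 (n - 2) + R1 (n - 2) + r n)
    (hr0 : r 0 = 1) (hr1 : r 1 = 1)
    (hR10 : R1 0 = 1) (hR11 : R1 1 = 1)
    (hR20 : R2 0 = 1) (hR21 : R2 1 = 2)
    (hw : ∀ n : ℕ, w n = R2 n) :
    ∀ n : ℕ, 5 * w (2 * n) = 5 + (3 + 6 * n) * Nat.fib (2 * n) + 8 * n * Nat.fib (2 * n + 1) := by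
  intro n
  have hr_fib := eq_fib_succ_of_add_two (fun n ↦ hr (n + 2) le_add_self) hr0 hr1
  have hR1_fib := add_mod_two_eq_fib_of_add_two
    (fun n ↦ by rw [hR1 (n + 2) le_add_self, hr_fib]; rfl) hR10 hR11
  have hR2_fib := five_mul_add_mod_two_eq
    (fun n ↦ by rw [hR2 (n + 2) le_add_self, hr_fib]; rfl) hR1_fib hR20 hR21 (2 * n)
  rw [Nat.mul_mod_right] at hR2_fib
  rw [hw]
  linear_combination hR2_fib
end

section
/- For all integers n ≥ 0, 5·w_{2n+1} = (6 + 6n)·F_{2n+1} + (4 + 8n)·F_{2n+2}. -/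
/-!
The three sequences are solved one after another in closed form: `r n = F (n + 1)`,
`R1` sums every other Fibonacci number, so `R1 n = F (n + 2) - n % 2`, and finally
`5 R2 n = (3n + 3) F n + 4n F (n + 1) + 5 - 5 (n % 2)`, each by two-step induction.
The theorem is the odd case of the last formula.
-/

open Nat

lemma eq_fib_succ_of_fib_recurrence {r : ℕ → ℕ} (h0 : r 0 = 1) (h1 : r 1 = 1)
    (h : ∀ n, r (n + 2) = r (n + 1) + r n) (n : ℕ) : r n = fib (n + 1) := by
  induction n using Nat.twoStepInduction with
  | zero => exact h0
  | one => exact h1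
  | more n ih0 ih1 => rw [h, ih0, ih1, fib_add_two (n := n + 1)]; ring

lemma add_mod_two_eq_fib_of_alternate_sum {R : ℕ → ℕ} (h0 : R 0 = 1) (h1 : R 1 = 1)
    (h : ∀ n, R (n + 2) = R n + fib (n + 3)) (n : ℕ) : R n + n % 2 = fib (n + 2) := by
  induction n using Nat.twoStepInduction with
  | zero => simp [h0]
  | one => simp [h1, fib_add_two]
  | more n ih _ =>
    rw [h, fib_add_two (n := n + 2), ← ih, Nat.add_mod_right]
    ring

lemma five_mul_add_mod_two_eq_s15 {R R1 : ℕ → ℕ} (h0 : R 0 = 1) (h1 : R 1 = 2)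
    (hR1 : ∀ n, R1 n + n % 2 = fib (n + 2))
    (h : ∀ n, R (n + 2) = R (n + 1) + R n + R1 n + fib (n + 3)) (n : ℕ) :
    5 * R n + 5 * (n % 2) = (3 * n + 3) * fib n + 4 * n * fib (n + 1) + 5 := by
  induction n using Nat.twoStepInduction with
  | zero => simp [h0]
  | one => simp [h1]
  | more n ih0 ih1 =>
    -- the parity corrections of `R (n + 1)` and `R n` add up to the constant `5`
    have hparity : n % 2 + (n + 1) % 2 = 1 := by omega
    have hR1n := hR1 n
    rw [h, Nat.add_mod_right]
    simp only [fib_add_two] at ih1 hR1n ⊢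
    linarith

theorem stmt_15 (r R1 R2 w : ℕ → ℕ)
    (hr : ∀ n : ℕ, 2 ≤ n → r n = r (n - 1) + r (n - 2))
    (hR1 : ∀ n : ℕ, 2 ≤ n → R1 n = R1 (n - 2) + r n)
    (hR2 : ∀ n : ℕ, 2 ≤ n → R2 n = R2 (n - 1) + R2 (n - 2) + R1 (n - 2) + r n)
    (hr0 : r 0 = 1) (hr1 : r 1 = 1)
    (hR10 : R1 0 = 1) (hR11 : R1 1 = 1)
    (hR20 : R2 0 = 1) (hR21 : R2 1 = 2)
    (hw : ∀ n : ℕ, w n = R2 n) :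
    ∀ n : ℕ, 5 * w (2 * n + 1)
      = (6 + 6 * n) * Nat.fib (2 * n + 1) + (4 + 8 * n) * Nat.fib (2 * n + 2) := by
  have hr_fib : ∀ n, r n = fib (n + 1) :=
    eq_fib_succ_of_fib_recurrence hr0 hr1 fun n => hr (n + 2) (by omega)
  have hR1_fib : ∀ n, R1 n + n % 2 = fib (n + 2) :=
    add_mod_two_eq_fib_of_alternate_sum hR10 hR11 fun n => by
      rw [← hr_fib]; exact hR1 (n + 2) (by omega)
  have hR2_fib := five_mul_add_mod_two_eq_s15 hR20 hR21 hR1_fib fun n => by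
    rw [← hr_fib]; exact hR2 (n + 2) (by omega)
  intro n
  have h := hR2_fib (2 * n + 1)
  rw [show (2 * n + 1) % 2 = 1 by omega] at h
  rw [hw]
  linarith
end

section
/- For all integers n ≥ 0, as real numbers, w_n = 1/2 + (-1)^n/2 + (3√5/25 + ((2+√5)/5)·n)·α^n + (-3√5/25 + ((2-√5)/5)·n)·β^n, where α = (1+√5)/2 and β = (1-√5)/2. -/
theorem stmt_16 (r R1 R2 w : ℕ → ℕ)
    (hr : ∀ n : ℕ, 2 ≤ n → r n = r (n - 1) + r (n - 2))
    (hR1 : ∀ n : ℕ, 2 ≤ n → R1 n = R1 (n - 2) + r n)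
    (hR2 : ∀ n : ℕ, 2 ≤ n → R2 n = R2 (n - 1) + R2 (n - 2) + R1 (n - 2) + r n)
    (hr0 : r 0 = 1) (hr1 : r 1 = 1)
    (hR10 : R1 0 = 1) (hR11 : R1 1 = 1)
    (hR20 : R2 0 = 1) (hR21 : R2 1 = 2)
    (hw : ∀ n : ℕ, w n = R2 n) :
    ∀ n : ℕ, (w n : ℝ)
      = 1 / 2 + (-1 : ℝ) ^ n / 2
        + (3 * Real.sqrt 5 / 25 + (2 + Real.sqrt 5) / 5 * n) * ((1 + Real.sqrt 5) / 2) ^ n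
        + (-(3 * Real.sqrt 5) / 25 + (2 - Real.sqrt 5) / 5 * n) * ((1 - Real.sqrt 5) / 2) ^ n := by
  have hs : Real.sqrt 5 ^ 2 = 5 := Real.sq_sqrt (by norm_num)
  have hs0 : Real.sqrt 5 ≠ 0 := by positivity
  -- closed forms in terms of Fibonacci numbers
  set F : ℕ → ℝ := fun m => (Nat.fib m : ℝ) with hF
  have P : ∀ n : ℕ,
      ((r n : ℝ) = F (n+1) ∧ (R1 n : ℝ) = F (n+2) - 1/2 + (-1:ℝ)^n/2 ∧
       (R2 n : ℝ) = n * F n + 1/2 + (-1:ℝ)^n/2 + ((3 - 2*n) * F n + 4*n*F (n+1))/5) := by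
    have key : ∀ n : ℕ,
        (((r n : ℝ) = F (n+1) ∧ (R1 n : ℝ) = F (n+2) - 1/2 + (-1:ℝ)^n/2 ∧
         (R2 n : ℝ) = n * F n + 1/2 + (-1:ℝ)^n/2 + ((3 - 2*n) * F n + 4*n*F (n+1))/5) ∧
        ((r (n+1) : ℝ) = F ((n+1)+1) ∧ (R1 (n+1) : ℝ) = F ((n+1)+2) - 1/2 + (-1:ℝ)^(n+1)/2 ∧
         (R2 (n+1) : ℝ) = (((n+1 : ℕ)) : ℝ) * F (n+1) + 1/2 + (-1:ℝ)^(n+1)/2 + ((3 - 2*(((n+1 : ℕ)) : ℝ)) * F (n+1) + 4*(((n+1 : ℕ)) : ℝ)*F ((n+1)+1))/5)) := by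
      intro n
      induction n with
      | zero =>
        simp only [hF]
        norm_num [hr0, hr1, hR10, hR11, hR20, hR21, Nat.fib]
      | succ k ih =>
        refine ⟨ih.2, ?_, ?_, ?_⟩
        · have h := hr (k+2) (by omega)
          simp only [show k+2-1 = k+1 from rfl, show k+2-2 = k from rfl] at h
          rw [h]
          push_cast
          rw [ih.1.1, ih.2.1]
          have : F (k+3) = F (k+1) + F (k+2) := by
            simp only [hF]; push_cast [Nat.fib_add_two]; ring
          rw [this]; ring
        · have h := hR1 (k+2) (by omega)
          simp only [show k+2-2 = k from rfl] at h
          have h2 := hr (k+2) (by omega)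
          simp only [show k+2-1 = k+1 from rfl, show k+2-2 = k from rfl] at h2
          rw [h, h2]
          push_cast
          rw [ih.1.2.1, ih.1.1, ih.2.1]
          have e3 : F (k+4) = F (k+2) + F (k+3) := by
            simp only [hF]; push_cast [show k+4 = (k+2)+2 from rfl, Nat.fib_add_two]; ring
          have e2 : F (k+3) = F (k+1) + F (k+2) := by
            simp only [hF]; push_cast [show k+3 = (k+1)+2 from rfl, Nat.fib_add_two]; ring
          rw [e3, e2]; ring
        · have h := hR2 (k+2) (by omega)
          simp only [show k+2-1 = k+1 from rfl, show k+2-2 = k from rfl] at h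
          have h2 := hr (k+2) (by omega)
          simp only [show k+2-1 = k+1 from rfl, show k+2-2 = k from rfl] at h2
          rw [h, h2]
          push_cast
          rw [ih.1.2.2, ih.2.2.2, ih.1.2.1, ih.1.1, ih.2.1]
          have e3 : F (k+3) = F (k+1) + F (k+2) := by
            simp only [hF]; push_cast [show k+3 = (k+1)+2 from rfl, Nat.fib_add_two]; ring
          have e2 : F (k+2) = F k + F (k+1) := by
            simp only [hF]; push_cast [Nat.fib_add_two]; ring
          rw [e3, e2]; push_cast; ring
    exact fun n => (key n).1
  intro n
  rw [hw n, (P n).2.2]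
  -- Binet
  have hFB : ∀ m : ℕ, Real.sqrt 5 * F m
      = ((1 + Real.sqrt 5)/2)^m - ((1 - Real.sqrt 5)/2)^m := by
    intro m
    have := Real.coe_fib_eq m
    simp only [hF]
    rw [this]
    field_simp
  apply mul_left_cancel₀ hs0
  linear_combination (n + (3 - 2*(n:ℝ))/5) * hFB n + (4*(n:ℝ)/5) * hFB (n+1)
    + (((n:ℝ)/5 + 3/25) * (((1 - Real.sqrt 5)/2)^n - ((1 + Real.sqrt 5)/2)^n)) * hs
end

section
/- For all integers n ≥ 0, w_n = ⌈(3√5/25 + ((2+√5)/5)·n)·α^n⌉, where α = (1+√5)/2 and ⌈·⌉ denotes the ceiling function on the reals. -/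
/-!
Unwinding the recurrences gives `r n = fib (n + 1)` and `R1 n = fib (n + 2) - [n odd]`, so `R2`
solves the Fibonacci recurrence forced by `fib (n + 4) - [n odd]`. Its solution is
`R2 n = (3√5/25 + (2+√5)/5 · n) φⁿ + (-3√5/25 + (2-√5)/5 · n) ψⁿ + (1 + (-1)ⁿ)/2`.
Since `ψⁿ = (-1)ⁿ (-ψ)ⁿ` with `0 < -ψ < 1`, the last two summands equal `1 - t` (n even) or `t`
(n odd) for some `0 < t ≤ 3√5/25 < 1`, so `R2 n` is the ceiling of the first summand.
-/

open Real goldenRatio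

theorem affine_mul_pow_add_two {R : Type*} [CommRing R] {x : R} (hx : x ^ 2 = x + 1)
    (a b : R) (n : ℕ) :
    (a + b * (n + 2)) * x ^ (n + 2) =
      (a + b * (n + 1)) * x ^ (n + 1) + (a + b * n) * x ^ n + b * (2 * x - 1) * x ^ (n + 1) := by
  linear_combination (a + b * n) * x ^ n * hx

theorem affine_mul_pow_le {c d γ : ℝ} (hd : 0 ≤ d) (hγ₀ : 0 ≤ γ) (hγ₁ : γ ≤ 1)
    (h : d * γ ≤ c * (1 - γ)) (n : ℕ) : (c + d * n) * γ ^ n ≤ c := by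
  induction n with
  | zero => simp
  | succ n ih =>
    have hpow : γ ^ (n + 1) ≤ γ := pow_le_of_le_one hγ₀ hγ₁ n.succ_ne_zero
    calc (c + d * (n + 1 : ℕ)) * γ ^ (n + 1) = γ * ((c + d * n) * γ ^ n) + d * γ ^ (n + 1) := by
          push_cast; ring
      _ ≤ γ * c + d * γ := by gcongr
      _ ≤ c := by linarith

theorem one_add_neg_one_pow_div_two_sub_mem_Ioo {t : ℝ} (h₀ : 0 < t) (h₁ : t < 1) (n : ℕ) :
    (1 + (-1) ^ n) / 2 - (-1) ^ n * t ∈ Set.Ioo 0 1 := by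
  rcases n.even_or_odd with hn | hn <;> rw [hn.neg_one_pow] <;> constructor <;> linarith

-- Binet's formula for `fib (m + 3)`, written through `φ³ / √5 = (2 + √5) / 5 * (2φ - 1)`.
theorem cast_fib_add_three (m : ℕ) :
    (Nat.fib (m + 3) : ℝ) =
      (2 + √5) / 5 * (2 * φ - 1) * φ ^ m + (2 - √5) / 5 * (2 * ψ - 1) * ψ ^ m := by
  have h5 : √5 ^ 2 = 5 := sq_sqrt (by norm_num)
  induction m using Nat.twoStepInduction with
  | zero => norm_num; linear_combination (-2 / 5) * h5
  | one => norm_num; linear_combination (-3 / 5) * h5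
  | more m ih₀ ih₁ =>
    rw [Nat.fib_add_two (n := m + 3)]; push_cast
    rw [show m + 1 + 3 = m + 3 + 1 by ring] at ih₁
    linear_combination ih₁ + ih₀ - ((2 + √5) / 5 * (2 * φ - 1) * φ ^ m) * goldenRatio_sq
      - ((2 - √5) / 5 * (2 * ψ - 1) * ψ ^ m) * goldenConj_sq

noncomputable def errorTerm (n : ℕ) : ℝ :=
  (-(3 * √5 / 25) + (2 - √5) / 5 * n) * ψ ^ n + (1 + (-1) ^ n) / 2

theorem errorTerm_mem_Ioo (n : ℕ) : errorTerm n ∈ Set.Ioo 0 1 := by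
  have h5 : √5 ^ 2 = 5 := sq_sqrt (by norm_num)
  have h2 : 2 < √5 := by nlinarith [sqrt_nonneg 5]
  have h3 : √5 < 3 := by nlinarith [sqrt_nonneg 5]
  have hγ₀ : 0 < -ψ := neg_pos.mpr goldenConj_neg
  have hγ₁ : -ψ < 1 := by linarith [neg_one_lt_goldenConj]
  have hd : 0 ≤ (√5 - 2) / 5 := by linarith
  have hle : (3 * √5 / 25 + (√5 - 2) / 5 * n) * (-ψ) ^ n ≤ 3 * √5 / 25 :=
    affine_mul_pow_le hd hγ₀.le hγ₁.le (by simp only [goldenConj]; nlinarith) n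
  have hpos : 0 < (3 * √5 / 25 + (√5 - 2) / 5 * n) * (-ψ) ^ n := by positivity
  convert one_add_neg_one_pow_div_two_sub_mem_Ioo hpos (by linarith) n using 1
  rw [errorTerm, show ψ = -(-ψ) by ring, neg_pow (-ψ)]
  ring

section Recurrences

variable {r R1 R2 : ℕ → ℕ}

theorem eq_fib_succ_of_recurrence (hr : ∀ n, r (n + 2) = r (n + 1) + r n)
    (h₀ : r 0 = 1) (h₁ : r 1 = 1) (n : ℕ) : r n = Nat.fib (n + 1) := by
  induction n using Nat.twoStepInduction with
  | zero => exact h₀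
  | one => exact h₁
  | more n ih₀ ih₁ => rw [hr, ih₀, ih₁, Nat.fib_add_two (n := n + 1)]; ring

theorem cast_eq_fib_sub_of_recurrence (hr : ∀ n, r n = Nat.fib (n + 1))
    (hR1 : ∀ n, R1 (n + 2) = R1 n + r (n + 2)) (h₀ : R1 0 = 1) (h₁ : R1 1 = 1) (n : ℕ) :
    (R1 n : ℝ) = Nat.fib (n + 2) - (1 - (-1) ^ n) / 2 := by
  induction n using Nat.twoStepInduction with
  | zero => simp [h₀]
  | one => norm_num [h₁]
  | more n ih₀ _ =>
    rw [hR1, hr]; push_cast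
    rw [ih₀, Nat.fib_add_two (n := n + 2)]; push_cast; ring

theorem cast_eq_closed_form_of_recurrence (hr : ∀ n, r n = Nat.fib (n + 1))
    (hR1 : ∀ n, (R1 n : ℝ) = Nat.fib (n + 2) - (1 - (-1) ^ n) / 2)
    (hR2 : ∀ n, R2 (n + 2) = R2 (n + 1) + R2 n + R1 n + r (n + 2))
    (h₀ : R2 0 = 1) (h₁ : R2 1 = 2) (n : ℕ) :
    (R2 n : ℝ) = (3 * √5 / 25 + (2 + √5) / 5 * n) * φ ^ n + errorTerm n := by
  have h5 : √5 ^ 2 = 5 := sq_sqrt (by norm_num)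
  simp only [errorTerm]
  induction n using Nat.twoStepInduction with
  | zero => norm_num [h₀]
  | one => norm_num [h₁]; linear_combination (-8 / 25) * h5
  | more n ih₀ ih₁ =>
    have hfib : (Nat.fib (n + 2 + 2) : ℝ) = Nat.fib (n + 2) + Nat.fib (n + 2 + 1) :=
      mod_cast Nat.fib_add_two
    rw [hR2]; push_cast at ih₁ ⊢
    rw [ih₀, ih₁, hR1, hr]
    linear_combination cast_fib_add_three (n + 1) - hfib
      - affine_mul_pow_add_two goldenRatio_sq (3 * √5 / 25) ((2 + √5) / 5) n
      - affine_mul_pow_add_two goldenConj_sq (-(3 * √5 / 25)) ((2 - √5) / 5) n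

end Recurrences

theorem stmt_17 (r R1 R2 w : ℕ → ℕ)
    (hr : ∀ n : ℕ, 2 ≤ n → r n = r (n - 1) + r (n - 2))
    (hR1 : ∀ n : ℕ, 2 ≤ n → R1 n = R1 (n - 2) + r n)
    (hR2 : ∀ n : ℕ, 2 ≤ n → R2 n = R2 (n - 1) + R2 (n - 2) + R1 (n - 2) + r n)
    (hr0 : r 0 = 1) (hr1 : r 1 = 1)
    (hR10 : R1 0 = 1) (hR11 : R1 1 = 1)
    (hR20 : R2 0 = 1) (hR21 : R2 1 = 2)
    (hw : ∀ n : ℕ, w n = R2 n) :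
    ∀ n : ℕ, (w n : ℤ)
      = ⌈(3 * Real.sqrt 5 / 25 + (2 + Real.sqrt 5) / 5 * n)
          * ((1 + Real.sqrt 5) / 2) ^ n⌉ := by
  have hr_fib : ∀ n, r n = Nat.fib (n + 1) :=
    eq_fib_succ_of_recurrence (fun n => hr (n + 2) (by omega)) hr0 hr1
  have hR1_fib := cast_eq_fib_sub_of_recurrence hr_fib (fun n => hR1 (n + 2) (by omega)) hR10 hR11
  intro n
  have hR2_closed :=
    cast_eq_closed_form_of_recurrence hr_fib hR1_fib (fun n => hR2 (n + 2) (by omega)) hR20 hR21 n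
  obtain ⟨herror₀, herror₁⟩ := errorTerm_mem_Ioo n
  rw [hw, eq_comm, Int.ceil_eq_iff]
  push_cast
  constructor <;> linarith
end
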